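/- For natural numbers i ≠ j, the tree encodings T(i) and T(j) are non-isomorphic (as rooted trees). -/

import Mathlib

/-!
The children of `T(n)` are the `T(a)` for the set bits `a` of `n`, all smaller than `n`. An
isomorphism `T(i) ≅ T(j)` matches every child of one tree with an isomorphic child of the other,
so by strong induction on `i` the set bits of `i` and `j` coincide, whence `i = j`.
-/

/-- Rooted trees: a root with a list of subtrees. -/
inductive RTree where
  | node : List RTree → RTree

/-- bit(j,i) = 0 if ⌊i/2^j⌋ is even, and 1 otherwise. -/
def bit (j i : ℕ) : ℕ := if (i / 2 ^ j) % 2 = 0 then 0 else 1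

/-- The tree encoding T(i): T(0) is the one-node tree; T(i) has subtrees
exactly the T(j) for those j with bit(j,i) = 1. -/
def Tenc (n : ℕ) : RTree :=
  .node (((List.range n).filter (fun j => bit j n = 1)).attach.map
    (fun ⟨j, hj⟩ => Tenc j))
termination_by n
decreasing_by
  simp only [List.mem_filter, List.mem_range] at hj
  exact hj.1

mutual
/-- Rooted-tree isomorphism: two trees are isomorphic iff the lists of subtrees
match up to a permutation, via pairwise isomorphisms. -/
def TIso : RTree → RTree → Prop
  | .node cs, .node ds => ∃ ds', ds.Perm ds' ∧ TIsoList cs ds'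
/-- Pairwise isomorphism of two lists of trees. -/
def TIsoList : List RTree → List RTree → Prop
  | [], [] => True
  | c :: cs, d :: ds => TIso c d ∧ TIsoList cs ds
  | _, _ => False
end

namespace List.Forall₂

variable {α β : Type*} {R : α → β → Prop} {l₁ : List α} {l₂ : List β}

theorem exists_mem_right (h : Forall₂ R l₁ l₂) {a : α} (ha : a ∈ l₁) : ∃ b ∈ l₂, R a b := by
  induction h with
  | nil => simp at ha
  | cons hab _ ih =>
    rcases mem_cons.1 ha with rfl | ha
    · exact ⟨_, mem_cons_self, hab⟩
    · obtain ⟨b, hb, hab⟩ := ih ha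
      exact ⟨b, mem_cons_of_mem _ hb, hab⟩

theorem exists_mem_left (h : Forall₂ R l₁ l₂) {b : β} (hb : b ∈ l₂) : ∃ a ∈ l₁, R a b :=
  exists_mem_right (Forall₂.flip (R := _root_.flip R) h) hb

end List.Forall₂

theorem tIsoList_iff_forall₂ : ∀ {cs ds : List RTree}, TIsoList cs ds ↔ List.Forall₂ TIso cs ds
  | [], [] | [], _ :: _ | _ :: _, [] => by simp [TIsoList]
  | c :: cs, d :: ds => by simp [TIsoList, tIsoList_iff_forall₂]

namespace TIso

variable {cs ds : List RTree}

theorem exists_iso_of_mem_left (h : TIso (.node cs) (.node ds)) {c : RTree} (hc : c ∈ cs) :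
    ∃ d ∈ ds, TIso c d := by
  obtain ⟨ds', hperm, hiso⟩ := h
  obtain ⟨d, hd, hcd⟩ := (tIsoList_iff_forall₂.1 hiso).exists_mem_right hc
  exact ⟨d, hperm.mem_iff.2 hd, hcd⟩

theorem exists_iso_of_mem_right (h : TIso (.node cs) (.node ds)) {d : RTree} (hd : d ∈ ds) :
    ∃ c ∈ cs, TIso c d := by
  obtain ⟨ds', hperm, hiso⟩ := h
  exact (tIsoList_iff_forall₂.1 hiso).exists_mem_left (hperm.mem_iff.1 hd)

end TIso

def setBits (n : ℕ) : List ℕ := (List.range n).filter (fun j => bit j n = 1)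

theorem lt_of_mem_setBits {a n : ℕ} (h : a ∈ setBits n) : a < n :=
  List.mem_range.1 (List.mem_filter.1 h).1

theorem bit_eq_one_iff_testBit {j n : ℕ} : bit j n = 1 ↔ n.testBit j := by
  rw [bit, Nat.testBit_eq_decide_div_mod_eq]
  split <;> simp <;> omega

theorem mem_setBits {a n : ℕ} : a ∈ setBits n ↔ n.testBit a := by
  simp only [setBits, List.mem_filter, List.mem_range, bit_eq_one_iff_testBit, decide_eq_true_eq]
  exact ⟨And.right, fun h => ⟨Nat.lt_two_pow_self.trans_le (Nat.ge_two_pow_of_testBit h), h⟩⟩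

theorem Tenc_eq_node (n : ℕ) : Tenc n = .node ((setBits n).map Tenc) := by
  rw [Tenc, List.map_attach_eq_pmap, List.pmap_eq_map, setBits]

theorem eq_of_tIso_Tenc {i j : ℕ} (h : TIso (Tenc i) (Tenc j)) : i = j := by
  induction i using Nat.strong_induction_on generalizing j with
  | _ i ih =>
  rw [Tenc_eq_node, Tenc_eq_node] at h
  refine Nat.eq_of_testBit_eq fun a => Bool.eq_iff_iff.2 ?_
  rw [← mem_setBits, ← mem_setBits]
  constructor
  · intro ha
    obtain ⟨_, hTb, hab⟩ := h.exists_iso_of_mem_left (List.mem_map_of_mem ha)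
    obtain ⟨b, hb, rfl⟩ := List.mem_map.1 hTb
    rwa [ih a (lt_of_mem_setBits ha) hab]
  · intro ha
    obtain ⟨_, hTc, hca⟩ := h.exists_iso_of_mem_right (List.mem_map_of_mem ha)
    obtain ⟨c, hc, rfl⟩ := List.mem_map.1 hTc
    rwa [← ih c (lt_of_mem_setBits hc) hca]

/-- Distinct natural numbers have non-isomorphic tree encodings. -/
theorem Tenc_not_iso (i j : ℕ) (hij : i ≠ j) : ¬ TIso (Tenc i) (Tenc j) :=
  fun h => hij (eq_of_tIso_Tenc h)
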